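/- arXiv:gr-qc/0703134 — 4 statements merged into one kernel-verified Lean document; each statement's English description precedes it below -/
import Mathlib

section
/- Suppose Θ : Der(A) → A is additive and X, Y, Z ∈ Der(A) are Hamiltonian derivations for a, b, c ∈ A respectively (with respect to the presymplectic pairing Ω determined by Θ). Then X(Y(c)) + Y(Z(a)) + Z(X(b)) = 0; that is, with the Peierls bracket defined by {a,b} := X(b), {b,c} := Y(c), {c,a} := Z(a), the Jacobi relation {a,{b,c}} + {b,{c,a}} + {c,{a,b}} = 0 holds. -/
/-- The presymplectic pairing determined by an additive symplectic potential `Θ`: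
`Ω(u, v) = u(Θ v) − v(Θ u) − Θ ⁅u, v⁆`. -/
noncomputable def presymplectic {R A : Type*} [CommRing R] [CommRing A] [Algebra R A]
    (Θ : Derivation R A A → A) (u v : Derivation R A A) : A :=
  u (Θ v) - v (Θ u) - Θ ⁅u, v⁆

/-- If `X`, `Y`, `Z` are Hamiltonian derivations for `a`, `b`, `c` with respect to the
presymplectic pairing determined by an additive symplectic potential `Θ`, then the
Peierls bracket `{a,b} := X(b)` satisfies the Jacobi relation
`{a,{b,c}} + {b,{c,a}} + {c,{a,b}} = 0`, i.e. `X(Y(c)) + Y(Z(a)) + Z(X(b)) = 0`. -/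
theorem peierls_jacobi {R A : Type*} [CommRing R] [CommRing A] [Algebra R A]
    (Θ : Derivation R A A → A)
    (hΘ : ∀ u v : Derivation R A A, Θ (u + v) = Θ u + Θ v)
    (a b c : A) (X Y Z : Derivation R A A)
    (hX : ∀ δ : Derivation R A A, δ a = presymplectic Θ X δ)
    (hY : ∀ δ : Derivation R A A, δ b = presymplectic Θ Y δ)
    (hZ : ∀ δ : Derivation R A A, δ c = presymplectic Θ Z δ) :
    X (Y c) + Y (Z a) + Z (X b) = 0 := by
  simp only [presymplectic] at hX hY hZ
  have hΘ0 : Θ 0 = 0 := by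
    have h := hΘ 0 0
    rw [add_zero] at h
    exact (left_eq_add.mp h)
  -- antisymmetry of Θ on opposite brackets
  have skew : ∀ u v : Derivation R A A, Θ ⁅u, v⁆ + Θ ⁅v, u⁆ = 0 := by
    intro u v
    have h : (⁅u, v⁆ : Derivation R A A) + ⁅v, u⁆ = 0 := by
      rw [← lie_skew v u, add_neg_cancel]
    rw [← hΘ, h, hΘ0]
  have N1 := skew Y Z
  have N2 := skew Z X
  have N3 := skew X Y
  -- Θ of the Jacobi sum vanishes
  have J : Θ ⁅X, ⁅Y, Z⁆⁆ + Θ ⁅Y, ⁅Z, X⁆⁆ + Θ ⁅Z, ⁅X, Y⁆⁆ = 0 := by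
    rw [← hΘ, ← hΘ, lie_jacobi X Y Z, hΘ0]
  -- images under derivations of the skew relations
  have M1 : X (Θ ⁅Z, Y⁆) + X (Θ ⁅Y, Z⁆) = 0 := by
    rw [← map_add, add_comm, N1, map_zero]
  have M2 : Y (Θ ⁅X, Z⁆) + Y (Θ ⁅Z, X⁆) = 0 := by
    rw [← map_add, add_comm, N2, map_zero]
  have M3 : Z (Θ ⁅Y, X⁆) + Z (Θ ⁅X, Y⁆) = 0 := by
    rw [← map_add, add_comm, N3, map_zero]
  -- antisymmetry of the Peierls pairing
  have hab : Y a + X b = 0 := by linear_combination hX Y + hY X - N3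
  have hbc : Z b + Y c = 0 := by linear_combination hY Z + hZ Y - N1
  have hca : X c + Z a = 0 := by linear_combination hZ X + hX Z - N2
  have C1 : Z (Y a) + Z (X b) = 0 := by rw [← map_add, hab, map_zero]
  have C2 : X (Z b) + X (Y c) = 0 := by rw [← map_add, hbc, map_zero]
  have C3 : Y (X c) + Y (Z a) = 0 := by rw [← map_add, hca, map_zero]
  -- Hamiltonian conditions at the brackets
  have B1 : Y (Z a) - Z (Y a)
      = X (Θ ⁅Y, Z⁆) - (Y (Z (Θ X)) - Z (Y (Θ X))) - Θ ⁅X, ⁅Y, Z⁆⁆ := by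
    have h := hX ⁅Y, Z⁆
    rwa [Derivation.commutator_apply, Derivation.commutator_apply] at h
  have B2 : Z (X b) - X (Z b)
      = Y (Θ ⁅Z, X⁆) - (Z (X (Θ Y)) - X (Z (Θ Y))) - Θ ⁅Y, ⁅Z, X⁆⁆ := by
    have h := hY ⁅Z, X⁆
    rwa [Derivation.commutator_apply, Derivation.commutator_apply] at h
  have B3 : X (Y c) - Y (X c)
      = Z (Θ ⁅X, Y⁆) - (X (Y (Θ Z)) - Y (X (Θ Z))) - Θ ⁅Z, ⁅X, Y⁆⁆ := by
    have h := hZ ⁅X, Y⁆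
    rwa [Derivation.commutator_apply, Derivation.commutator_apply] at h
  -- expansions of the triple applications
  have A1 : X (Y c) = X (Z (Θ Y)) - X (Y (Θ Z)) - X (Θ ⁅Z, Y⁆) := by
    rw [hZ Y, map_sub, map_sub]
  have A2 : Y (Z a) = Y (X (Θ Z)) - Y (Z (Θ X)) - Y (Θ ⁅X, Z⁆) := by
    rw [hX Z, map_sub, map_sub]
  have A3 : Z (X b) = Z (Y (Θ X)) - Z (X (Θ Y)) - Z (Θ ⁅Y, X⁆) := by
    rw [hY X, map_sub, map_sub]
  linear_combination B1 + B2 + B3 - A1 - A2 - A3 + C1 + C2 + C3 + M1 + M2 + M3 - J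
end

section
/- For every real symmetric positive-definite 2×2 matrix h with det h = 1, there exists a unique complex number μ with |μ| < 1 such that h = E(μ). Thus μ ↦ E(μ) is a bijection from the open unit disc onto the set of symmetric positive-definite unimodular real 2×2 matrices; i.e., every conformal 2-metric can be expressed in the μ-parametrization. -/
/-!
For `|μ| < 1` one computes `tr E(μ) + 2 = 4 / (1 - |μ|²)`, `E₀₀ - E₁₁ = 4 Re μ / (1 - |μ|²)` and
`2 E₀₁ = 4 Im μ / (1 - |μ|²)`. Hence `h = E(μ)` forces `μ = (h₀₀ - h₁₁ + 2 i h₀₁) / (tr h + 2)`,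
which gives uniqueness; conversely this `μ` lies in the unit disc and reproduces `h` as soon as `h`
is symmetric with `det h = 1` and `tr h > -2`, which gives existence.
-/

noncomputable def conformalMetric (μ : ℂ) : Matrix (Fin 2) (Fin 2) ℝ :=
  (1 - ‖μ‖ ^ 2)⁻¹ •
    !![‖1 + μ‖ ^ 2, 2 * μ.im; 2 * μ.im, ‖1 - μ‖ ^ 2]

lemma Complex.sq_norm_eq_re_sq_add_im_sq (z : ℂ) : ‖z‖ ^ 2 = z.re ^ 2 + z.im ^ 2 := by
  rw [Complex.sq_norm, Complex.normSq_apply, sq, sq]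

lemma Matrix.IsSymm.exists_fin_two {α : Type*} {h : Matrix (Fin 2) (Fin 2) α} (hsymm : h.IsSymm) :
    ∃ a b c, h = !![a, b; b, c] :=
  ⟨h 0 0, h 0 1, h 1 1, by rw [Matrix.eta_fin_two h, ← hsymm.apply 0 1]; rfl⟩

lemma conformalMetric_eq_re_im (μ : ℂ) :
    conformalMetric μ = (1 - (μ.re ^ 2 + μ.im ^ 2))⁻¹ •
      !![(1 + μ.re) ^ 2 + μ.im ^ 2, 2 * μ.im; 2 * μ.im, (1 - μ.re) ^ 2 + μ.im ^ 2] := by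
  simp only [conformalMetric, Complex.sq_norm_eq_re_sq_add_im_sq, Complex.add_re,
    Complex.add_im, Complex.sub_re, Complex.sub_im, Complex.one_re, Complex.one_im, zero_add,
    zero_sub, neg_sq]

noncomputable def conformalParam (h : Matrix (Fin 2) (Fin 2) ℝ) : ℂ :=
  ⟨(h 0 0 - h 1 1) / (h.trace + 2), 2 * h 0 1 / (h.trace + 2)⟩

lemma conformalParam_conformalMetric {μ : ℂ} (hμ : ‖μ‖ < 1) :
    conformalParam (conformalMetric μ) = μ := by
  have hd : 1 - (μ.re ^ 2 + μ.im ^ 2) ≠ 0 := by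
    rw [← Complex.sq_norm_eq_re_sq_add_im_sq]
    nlinarith [norm_nonneg μ]
  apply Complex.ext <;>
  · simp only [conformalParam, conformalMetric_eq_re_im, Matrix.trace_fin_two, Matrix.smul_apply,
      Matrix.of_apply, Matrix.cons_val', Matrix.cons_val_zero, Matrix.cons_val_one,
      Matrix.empty_val', Matrix.cons_val_fin_one, smul_eq_mul]
    field_simp
    ring

lemma norm_conformalParam_lt_one {h : Matrix (Fin 2) (Fin 2) ℝ} (hsymm : h.IsSymm)
    (hdet : h.det = 1) (htr : -2 < h.trace) : ‖conformalParam h‖ < 1 := by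
  obtain ⟨a, b, c, rfl⟩ := hsymm.exists_fin_two
  simp only [Matrix.det_fin_two_of, Matrix.trace_fin_two_of] at hdet htr
  rw [← sq_lt_one_iff₀ (norm_nonneg _), Complex.sq_norm_eq_re_sq_add_im_sq]
  simp only [conformalParam, Matrix.trace_fin_two_of, Matrix.of_apply, Matrix.cons_val',
    Matrix.cons_val_zero, Matrix.cons_val_one, Matrix.empty_val', Matrix.cons_val_fin_one, div_pow]
  rw [← add_div, div_lt_one (by nlinarith)]
  nlinarith

lemma conformalMetric_conformalParam {h : Matrix (Fin 2) (Fin 2) ℝ} (hsymm : h.IsSymm)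
    (hdet : h.det = 1) (htr : h.trace + 2 ≠ 0) : conformalMetric (conformalParam h) = h := by
  obtain ⟨a, b, c, rfl⟩ := hsymm.exists_fin_two
  simp only [Matrix.det_fin_two_of, Matrix.trace_fin_two_of] at hdet htr
  have hden : 1 - (((a - c) / (a + c + 2)) ^ 2 + (2 * b / (a + c + 2)) ^ 2) = 4 / (a + c + 2) := by
    field_simp
    linear_combination 4 * hdet
  simp only [conformalMetric_eq_re_im, conformalParam, Matrix.trace_fin_two_of, Matrix.of_apply,
    Matrix.cons_val', Matrix.cons_val_zero, Matrix.cons_val_one, Matrix.empty_val',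
    Matrix.cons_val_fin_one]
  rw [hden]
  ext i j
  fin_cases i <;> fin_cases j <;>
    simp only [Fin.zero_eta, Fin.mk_one, Fin.isValue, inv_div, Matrix.smul_apply, Matrix.of_apply,
      Matrix.cons_val', Matrix.cons_val_zero, Matrix.cons_val_one, Matrix.cons_val_fin_one,
      smul_eq_mul] <;>
    field_simp
  · linear_combination (-4) * hdet
  · ring
  · ring
  · linear_combination (-4) * hdet

/-- Every real symmetric positive-definite 2×2 matrix `h` with `det h = 1` equals
`E(μ)` for a unique complex `μ` in the open unit disc: `μ ↦ E(μ)` is a bijection from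
the open unit disc onto the set of symmetric positive-definite unimodular real
2×2 matrices. -/
theorem conformalMetric_existsUnique (h : Matrix (Fin 2) (Fin 2) ℝ)
    (hsymm : h.IsSymm) (hpos : h.PosDef) (hdet : h.det = 1) :
    ∃! μ : ℂ, ‖μ‖ < 1 ∧ h = conformalMetric μ := by
  have htr : 0 < h.trace := hpos.trace_pos
  refine ⟨conformalParam h, ⟨norm_conformalParam_lt_one hsymm hdet (by linarith), ?_⟩, ?_⟩
  · exact (conformalMetric_conformalParam hsymm hdet (by linarith)).symm
  · rintro μ ⟨hμ, rfl⟩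
    exact (conformalParam_conformalMetric hμ).symm
end

section
/- Let α, β, μ ∈ ℂ with |β| < |α| and |μ| < 1, and let M be the 2×2 real matrix of the ℝ-linear map ℝ² → ℝ² given in complex notation by ζ ↦ α·ζ + conj(β)·conj(ζ) (identifying (v₁, v₂) ∈ ℝ² with ζ = v₁ + i·v₂). Then det M = |α|² − |β|² and E(T(μ)) = (|α|² − |β|²)⁻¹ · Mᵀ · E(μ) · M. That is, the μ-parametrization intertwines the Möbius transformation of μ with the tensor-density transformation law e′_{cd} = (∂θᵃ/∂θ′ᶜ)(∂θᵇ/∂θ′ᵈ)·|det(∂θ′/∂θ)|·e_{ab} of the conformal 2-metric under a linear change of the transverse coordinates. -/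
/-- The Möbius-type transformation of the conformal 2-metric parameter `μ` induced by
the change of transverse complex coordinate `z = α·z′ + conj(β)·conj(z′)`:
`T(μ) = (conj β + μ·conj α)/(α + μ·β)`. -/
noncomputable def mobiusT (α β μ : ℂ) : ℂ :=
  ((starRingEnd ℂ) β + μ * (starRingEnd ℂ) α) / (α + μ * β)

open ComplexConjugate Matrix

def complexOfVec (v : Fin 2 → ℝ) : ℂ := v 0 + v 1 * Complex.I

def conjLinearMatrix (α β : ℂ) : Matrix (Fin 2) (Fin 2) ℝ :=
  !![α.re + β.re, -α.im - β.im; α.im - β.im, α.re - β.re]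

theorem eq_conjLinearMatrix_of_complexOfVec_mulVec {α β : ℂ} {M : Matrix (Fin 2) (Fin 2) ℝ}
    (hM : ∀ v, complexOfVec (M *ᵥ v) = α * complexOfVec v + conj β * conj (complexOfVec v)) :
    M = conjLinearMatrix α β := by
  have h₀ := hM ![1, 0]
  have h₁ := hM ![0, 1]
  simp only [complexOfVec, mulVec, dotProduct, Fin.sum_univ_two, cons_val_zero, mul_one,
    cons_val_one, cons_val_fin_one, mul_zero, add_zero, Complex.ofReal_one, Complex.ofReal_zero,
    zero_mul, map_one, Complex.ext_iff, Complex.add_re, Complex.ofReal_re, Complex.mul_re,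
    Complex.I_re, Complex.ofReal_im, Complex.I_im, sub_self, Complex.conj_re, Complex.add_im,
    Complex.mul_im, zero_add, Complex.conj_im, one_mul, Complex.conj_I, mul_neg, zero_sub,
    Complex.neg_re, sub_neg_eq_add, Complex.neg_im] at h₀ h₁
  rw [eta_fin_two M, conjLinearMatrix, h₀.1, h₀.2, h₁.1, h₁.2]
  ring_nf

theorem det_conjLinearMatrix (α β : ℂ) :
    (conjLinearMatrix α β).det = Complex.normSq α - Complex.normSq β := by
  rw [conjLinearMatrix, det_fin_two_of, Complex.normSq_apply, Complex.normSq_apply]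
  ring

theorem Matrix.ext_of_dotProduct_mulVec {R m n : Type*} [NonAssocSemiring R] [Fintype m]
    [Fintype n] [DecidableEq m] [DecidableEq n] {A B : Matrix m n R} (h : ∀ v w, v ⬝ᵥ A *ᵥ w = v ⬝ᵥ B *ᵥ w) : A = B := by
  ext i j
  simpa [mulVec_single, single_dotProduct] using h (Pi.single i 1) (Pi.single j 1)

theorem Matrix.dotProduct_transpose_mul_mul_mulVec {R m n : Type*} [CommSemiring R] [Fintype m]
    [Fintype n] (A : Matrix m m R) (M : Matrix m n R) (v w : n → R) :
    v ⬝ᵥ (Mᵀ * A * M) *ᵥ w = (M *ᵥ v) ⬝ᵥ A *ᵥ (M *ᵥ w) := by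
  rw [← mulVec_mulVec, ← mulVec_mulVec, dotProduct_mulVec, vecMul_transpose]

noncomputable def conformalForm (μ z w : ℂ) : ℝ :=
  ((z + μ * conj z) * conj (w + μ * conj w)).re / (1 - ‖μ‖ ^ 2)

theorem dotProduct_conformalMetric_mulVec (μ : ℂ) (v w : Fin 2 → ℝ) :
    v ⬝ᵥ conformalMetric μ *ᵥ w = conformalForm μ (complexOfVec v) (complexOfVec w) := by
  simp only [conformalMetric, conformalForm, complexOfVec, Complex.sq_norm, Complex.normSq_apply,
    mulVec, dotProduct, Fin.sum_univ_two, Complex.add_re, Complex.one_re, Complex.add_im, Complex.one_im, zero_add,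
    Complex.sub_re, Complex.sub_im, zero_sub, mul_neg, neg_mul, neg_neg, Matrix.smul_apply,
    of_apply, cons_val', cons_val_zero, cons_val_fin_one, smul_eq_mul, cons_val_one, map_add,
    Complex.conj_ofReal, map_mul, Complex.conj_I, map_neg, Complex.mul_re, Complex.ofReal_re,
    Complex.I_re, mul_zero, Complex.ofReal_im, Complex.I_im, mul_one, sub_self, add_zero,
    Complex.neg_re, neg_zero, Complex.neg_im, Complex.mul_im, sub_neg_eq_add, Complex.conj_re,
    Complex.conj_im]
  ring

theorem add_mul_ne_zero_of_norm_lt {α β μ : ℂ} (hβα : ‖β‖ < ‖α‖) (hμ : ‖μ‖ < 1) :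
    α + μ * β ≠ 0 := by
  have : ‖μ * β‖ < ‖α‖ := by
    rw [norm_mul]
    nlinarith [norm_nonneg μ, norm_nonneg β]
  intro h
  rw [eq_neg_of_add_eq_zero_left h, norm_neg] at this
  exact lt_irrefl _ this

theorem normSq_add_mul_sub_normSq_conj_add_mul (α β μ : ℂ) :
    Complex.normSq (α + μ * β) - Complex.normSq (conj β + μ * conj α) =
      (Complex.normSq α - Complex.normSq β) * (1 - Complex.normSq μ) := by
  simp only [Complex.normSq_apply, Complex.add_re, Complex.add_im, Complex.mul_re,
    Complex.mul_im, Complex.conj_re, Complex.conj_im]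
  ring

theorem one_sub_sq_norm_mobiusT {α β μ : ℂ} (hD : α + μ * β ≠ 0) :
    1 - ‖mobiusT α β μ‖ ^ 2 =
      (‖α‖ ^ 2 - ‖β‖ ^ 2) * (1 - ‖μ‖ ^ 2) / ‖α + μ * β‖ ^ 2 := by
  simp only [Complex.sq_norm, ← normSq_add_mul_sub_normSq_conj_add_mul, mobiusT,
    Complex.normSq_div]
  have : Complex.normSq (α + μ * β) ≠ 0 := Complex.normSq_eq_zero.not.mpr hD
  field_simp

theorem mul_add_mobiusT_mul_conj {α β μ : ℂ} (hD : α + μ * β ≠ 0) (z : ℂ) :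
    (α + μ * β) * (z + mobiusT α β μ * conj z) =
      (α * z + conj β * conj z) + μ * conj (α * z + conj β * conj z) := by
  rw [mobiusT, mul_add, ← mul_assoc, mul_div_cancel₀ _ hD]
  simp only [map_add, map_mul, Complex.conj_conj]
  ring

theorem re_mul_mul_conj_mul_mul (c a b : ℂ) :
    (c * a * conj (c * b)).re = Complex.normSq c * (a * conj b).re := by
  rw [map_mul, mul_mul_mul_comm, Complex.mul_conj, Complex.re_ofReal_mul]

theorem conformalForm_mobiusT {α β μ : ℂ} (hβα : ‖β‖ < ‖α‖) (hμ : ‖μ‖ < 1) (z w : ℂ) :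
    conformalForm (mobiusT α β μ) z w =
      (‖α‖ ^ 2 - ‖β‖ ^ 2)⁻¹ *
        conformalForm μ (α * z + conj β * conj z) (α * w + conj β * conj w) := by
  have hD := add_mul_ne_zero_of_norm_lt hβα hμ
  have hαβ : ‖α‖ ^ 2 - ‖β‖ ^ 2 ≠ 0 := by nlinarith [norm_nonneg β]
  have hμ' : 1 - ‖μ‖ ^ 2 ≠ 0 := by nlinarith [norm_nonneg μ]
  have hD' : ‖α + μ * β‖ ^ 2 ≠ 0 := by positivity
  rw [conformalForm, conformalForm, ← mul_add_mobiusT_mul_conj hD,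
    ← mul_add_mobiusT_mul_conj hD, re_mul_mul_conj_mul_mul, one_sub_sq_norm_mobiusT hD,
    ← Complex.sq_norm]
  field_simp

/-- If `M` is the real 2×2 matrix of the ℝ-linear map `ζ ↦ α·ζ + conj(β)·conj(ζ)`
(identifying `(v₁, v₂) ∈ ℝ²` with `ζ = v₁ + i·v₂`), where `|β| < |α|`, then
`det M = |α|² − |β|²` and `E(T(μ)) = (|α|² − |β|²)⁻¹ · Mᵀ · E(μ) · M` for every `μ`
in the open unit disc: the `μ`-parametrization intertwines the Möbius transformation
with the tensor-density transformation law of the conformal 2-metric. -/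
theorem conformalMetric_transformation (α β μ : ℂ)
    (hβα : ‖β‖ < ‖α‖) (hμ : ‖μ‖ < 1)
    (M : Matrix (Fin 2) (Fin 2) ℝ)
    (hM : ∀ v : Fin 2 → ℝ,
      ((M.mulVec v 0 : ℝ) : ℂ) + ((M.mulVec v 1 : ℝ) : ℂ) * Complex.I =
        α * ((v 0 : ℂ) + (v 1 : ℂ) * Complex.I) +
          (starRingEnd ℂ) β * (starRingEnd ℂ) ((v 0 : ℂ) + (v 1 : ℂ) * Complex.I)) :
    M.det = ‖α‖ ^ 2 - ‖β‖ ^ 2 ∧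
      conformalMetric (mobiusT α β μ) =
        (‖α‖ ^ 2 - ‖β‖ ^ 2)⁻¹ • (M.transpose * conformalMetric μ * M) := by
  have hMζ : ∀ v, complexOfVec (M *ᵥ v) = α * complexOfVec v + conj β * conj (complexOfVec v) :=
    hM
  refine ⟨?_, ext_of_dotProduct_mulVec fun v w => ?_⟩
  · rw [eq_conjLinearMatrix_of_complexOfVec_mulVec hMζ, det_conjLinearMatrix, Complex.sq_norm,
      Complex.sq_norm]
  · rw [smul_mulVec, dotProduct_smul, dotProduct_transpose_mul_mul_mulVec, smul_eq_mul,
      dotProduct_conformalMetric_mulVec, dotProduct_conformalMetric_mulVec, hMζ v, hMζ w]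
    exact conformalForm_mobiusT hβα hμ _ _
end

section
/- The map μ ↦ E(μ) is (real-)differentiable on the open unit disc {μ ∈ ℂ : |μ| < 1}, viewed as a map from ℂ as a real vector space into the 2×2 real matrices, and for every μ with |μ| < 1 and all w₁, w₂ ∈ ℂ, trace( E(μ)⁻¹ · (DE(μ) w₁) · E(μ)⁻¹ · (DE(μ) w₂) ) = 8 · Re(w₁ · conj(w₂)) / (1 − |μ|²)², where DE(μ) denotes the Fréchet derivative of E at μ. (Equivalently, in index notation, Δ₁e_{ij} Δ₂e^{ij} = −4(1 − |μ|²)⁻²(Δ₁μ Δ₂μ̄ + Δ₁μ̄ Δ₂μ) for variations of the conformal 2-metric e = E(μ) and its inverse.) -/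
attribute [local instance] Matrix.normedAddCommGroup Matrix.normedSpace

/-!
Let `S = mulConjMatrix`. It is real-linear, `S(μ)² = ‖μ‖²`, and
`E(μ) = ((1 + ‖μ‖²) + 2 S(μ)) / (1 - ‖μ‖²)`. Hence `E(μ)⁻¹ = ((1 + ‖μ‖²) - 2 S(μ)) / (1 - ‖μ‖²)`,
the derivative of `E` is elementary, and `E(μ)⁻¹ · DE(μ) w` collapses to
`2 (1 - ‖μ‖²)⁻² (2⟪μ, w⟫ (1 - S(μ)) + ((1 + ‖μ‖²) - 2 S(μ)) S(w))`. The trace of a product of two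
of these is a polynomial identity in the coordinates.
-/

/-- The matrix of `z ↦ μ * conj z` in the real basis `1, i` of `ℂ`. -/
def mulConjMatrix (μ : ℂ) : Matrix (Fin 2) (Fin 2) ℝ :=
  !![μ.re, μ.im; μ.im, -μ.re]

lemma mulConjMatrix_add_smul (μ w : ℂ) (t : ℝ) :
    mulConjMatrix (μ + t • w) = mulConjMatrix μ + t • mulConjMatrix w := by
  ext i j
  fin_cases i <;> fin_cases j <;> simp [mulConjMatrix, add_comm]

lemma mulConjMatrix_mul_self (μ : ℂ) : mulConjMatrix μ * mulConjMatrix μ = ‖μ‖ ^ 2 • 1 := by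
  rw [mulConjMatrix, Complex.sq_norm, Complex.normSq_apply]
  ext i j
  fin_cases i <;> fin_cases j <;> simp [Matrix.mul_apply] <;> ring

@[fun_prop]
lemma differentiable_mulConjMatrix : Differentiable ℝ mulConjMatrix := by
  have h : mulConjMatrix = fun μ => μ.re • !![1, 0; 0, -1] + μ.im • !![0, 1; 1, 0] := by
    funext μ
    ext i j
    fin_cases i <;> fin_cases j <;> simp [mulConjMatrix]
  rw [h]
  fun_prop

lemma one_sub_sq_norm_ne_zero {μ : ℂ} (hμ : ‖μ‖ ≠ 1) : 1 - ‖μ‖ ^ 2 ≠ 0 := by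
  rwa [sub_ne_zero, ne_comm, Ne, pow_eq_one_iff_of_nonneg (norm_nonneg μ) two_ne_zero]

lemma conformalMetric_eq (μ : ℂ) :
    conformalMetric μ = (1 - ‖μ‖ ^ 2)⁻¹ • ((1 + ‖μ‖ ^ 2) • 1 + 2 • mulConjMatrix μ) := by
  rw [conformalMetric, mulConjMatrix]
  congr 1
  simp only [Complex.sq_norm, Complex.normSq_apply]
  ext i j
  fin_cases i <;> fin_cases j <;> simp <;> ring

lemma conformalMetric_inv {μ : ℂ} (hμ : ‖μ‖ ≠ 1) :
    (conformalMetric μ)⁻¹ = (1 - ‖μ‖ ^ 2)⁻¹ • ((1 + ‖μ‖ ^ 2) • 1 - 2 • mulConjMatrix μ) := by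
  have hprod : ((1 + ‖μ‖ ^ 2) • 1 + 2 • mulConjMatrix μ) *
      ((1 + ‖μ‖ ^ 2) • 1 - 2 • mulConjMatrix μ) = (1 - ‖μ‖ ^ 2) ^ 2 • 1 := by
    simp only [add_mul, mul_sub, smul_mul_assoc, mul_smul_comm, mulConjMatrix_mul_self, mul_one,
      one_mul]
    module
  refine Matrix.inv_eq_right_inv ?_
  rw [conformalMetric_eq, smul_mul_smul_comm, hprod, smul_smul, ← sq, inv_pow,
    inv_mul_cancel₀ (pow_ne_zero 2 (one_sub_sq_norm_ne_zero hμ)), one_smul]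

lemma differentiableAt_conformalMetric {μ : ℂ} (hμ : ‖μ‖ ≠ 1) :
    DifferentiableAt ℝ conformalMetric μ := by
  have hr := one_sub_sq_norm_ne_zero hμ
  have hs : DifferentiableAt ℝ (fun x : ℂ => ‖x‖ ^ 2) μ := differentiableAt_id.norm_sq ℝ
  rw [funext conformalMetric_eq]
  fun_prop (disch := exact hr)

-- Differentiating along lines keeps the computation in `HasDerivAt`: continuous linear maps into
-- `Matrix` carry both the local normed instances and the default ones, which `simp` cannot match.
lemma hasLineDerivAt_conformalMetric {μ : ℂ} (hμ : ‖μ‖ ≠ 1) (w : ℂ) :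
    HasLineDerivAt ℝ conformalMetric
      ((4 * inner ℝ μ w / (1 - ‖μ‖ ^ 2) ^ 2) • (1 + mulConjMatrix μ) +
        (2 / (1 - ‖μ‖ ^ 2)) • mulConjMatrix w) μ w := by
  have hr := one_sub_sq_norm_ne_zero hμ
  have hs : HasDerivAt (fun t : ℝ => ‖μ + t • w‖ ^ 2) (2 * inner ℝ μ w) 0 := by
    simpa using (((hasDerivAt_id (0 : ℝ)).smul_const w).const_add μ).norm_sq
  have hS : HasDerivAt (fun t : ℝ => mulConjMatrix (μ + t • w)) (mulConjMatrix w) 0 := by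
    simp only [mulConjMatrix_add_smul]
    exact (((hasDerivAt_id' (x := (0 : ℝ))).smul_const (mulConjMatrix w)).const_add
      (mulConjMatrix μ)).congr_deriv (one_smul _ _)
  have H := ((hs.const_sub 1).inv (by simpa using hr)).smul
    (((hs.const_add 1).smul_const (1 : Matrix (Fin 2) (Fin 2) ℝ)).add (hS.const_smul 2))
  simp only [HasLineDerivAt, conformalMetric_eq]
  refine H.congr_deriv ?_
  simp only [Pi.inv_apply, Pi.add_apply, Pi.smul_apply, zero_smul, add_zero, neg_neg]
  match_scalars <;> field_simp <;> ring

lemma fderiv_conformalMetric_apply {μ : ℂ} (hμ : ‖μ‖ ≠ 1) (w : ℂ) :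
    fderiv ℝ conformalMetric μ w = (4 * inner ℝ μ w / (1 - ‖μ‖ ^ 2) ^ 2) • (1 + mulConjMatrix μ) +
        (2 / (1 - ‖μ‖ ^ 2)) • mulConjMatrix w :=
  (differentiableAt_conformalMetric hμ).lineDeriv_eq_fderiv.symm.trans
    (hasLineDerivAt_conformalMetric hμ w).lineDeriv

noncomputable def conformalVariation (μ w : ℂ) : Matrix (Fin 2) (Fin 2) ℝ :=
  (2 * inner ℝ μ w) • (1 - mulConjMatrix μ) +
    ((1 + ‖μ‖ ^ 2) • 1 - 2 • mulConjMatrix μ) * mulConjMatrix w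

lemma conformalMetric_inv_mul_fderiv {μ : ℂ} (hμ : ‖μ‖ ≠ 1) (w : ℂ) :
    (conformalMetric μ)⁻¹ * fderiv ℝ conformalMetric μ w =
      (2 / (1 - ‖μ‖ ^ 2) ^ 2) • conformalVariation μ w := by
  have hr := one_sub_sq_norm_ne_zero hμ
  rw [conformalMetric_inv hμ, fderiv_conformalMetric_apply hμ, conformalVariation]
  simp only [mul_add, sub_mul, smul_mul_assoc, mul_smul_comm, one_mul, mul_one,
    mulConjMatrix_mul_self]
  match_scalars <;> field_simp <;> ring

lemma trace_conformalVariation_mul (μ w₁ w₂ : ℂ) :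
    Matrix.trace (conformalVariation μ w₁ * conformalVariation μ w₂) =
      2 * (1 - ‖μ‖ ^ 2) ^ 2 * inner ℝ w₁ w₂ := by
  simp [conformalVariation, Matrix.trace_fin_two, Matrix.mul_apply, mulConjMatrix,
    Complex.sq_norm, Complex.normSq_apply]
  ring

lemma trace_conformalMetric_inv_mul_fderiv {μ : ℂ} (hμ : ‖μ‖ ≠ 1) (w₁ w₂ : ℂ) :
    Matrix.trace ((conformalMetric μ)⁻¹ * fderiv ℝ conformalMetric μ w₁ *
        (conformalMetric μ)⁻¹ * fderiv ℝ conformalMetric μ w₂) =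
      8 * inner ℝ w₁ w₂ / (1 - ‖μ‖ ^ 2) ^ 2 := by
  have hr := one_sub_sq_norm_ne_zero hμ
  rw [Matrix.mul_assoc _ (conformalMetric μ)⁻¹, conformalMetric_inv_mul_fderiv hμ,
    conformalMetric_inv_mul_fderiv hμ, smul_mul_smul_comm, Matrix.trace_smul,
    trace_conformalVariation_mul, smul_eq_mul]
  field_simp
  ring

/-- The map `μ ↦ E(μ)` is real-differentiable on the open unit disc (as a map from ℂ
viewed as a real vector space into the real 2×2 matrices), and for all `|μ| < 1` and
`w₁, w₂ ∈ ℂ` the Fréchet derivative `DE(μ)` satisfies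
`trace(E(μ)⁻¹·(DE(μ)w₁)·E(μ)⁻¹·(DE(μ)w₂)) = 8·Re(w₁·conj w₂)/(1 − |μ|²)²`;
equivalently `Δ₁e_{ij} Δ₂e^{ij} = −4(1−|μ|²)⁻²(Δ₁μ Δ₂μ̄ + Δ₁μ̄ Δ₂μ)`. -/
theorem conformalMetric_differentiable_trace_identity :
    (∀ μ : ℂ, ‖μ‖ < 1 → DifferentiableAt ℝ conformalMetric μ) ∧
      ∀ μ : ℂ, ‖μ‖ < 1 → ∀ w₁ w₂ : ℂ,
        Matrix.trace ((conformalMetric μ)⁻¹ * fderiv ℝ conformalMetric μ w₁ *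
            (conformalMetric μ)⁻¹ * fderiv ℝ conformalMetric μ w₂) =
          8 * (w₁ * (starRingEnd ℂ) w₂).re / (1 - ‖μ‖ ^ 2) ^ 2 := by
  refine ⟨fun μ hμ => differentiableAt_conformalMetric hμ.ne, fun μ hμ w₁ w₂ => ?_⟩
  rw [trace_conformalMetric_inv_mul_fderiv hμ.ne, real_inner_comm, Complex.inner]
end
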